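/- Suppose f(y) > 0 for all y ∈ Y, and suppose α > p*/q*. Then the set of global minimizers of the loss function L over Y coincides with the set of optimal solutions of the CMPE problem: a point y ∈ Y minimizes L over Y if and only if g(y) ≤ 0 and f(y) = p*. -/

import Mathlib

/-! Every feasible point has loss `f y ≥ p*`, with equality exactly at the optimal solutions, while
every infeasible point has loss `α (f y + g y) ≥ α q* > p*`; the last inequality is where
`α > p*/q*` enters, positivity of `f` making `p*` and `q*` positive so that the ratio can be
cleared. Hence `p*` is the least value of the loss, attained exactly at the optimal solutions. -/

open Set

theorem Finset.isLeast_image_inf' {ι β : Type*} [LinearOrder β] (s : Finset ι) (H : s.Nonempty)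
    (f : ι → β) : IsLeast (f '' s) (s.inf' H f) := by
  obtain ⟨i, hi, hfi⟩ := s.exists_mem_eq_inf' H f
  exact ⟨⟨i, hi, hfi.symm⟩, by rintro _ ⟨j, hj, rfl⟩; exact s.inf'_le f hj⟩

theorem forall_le_iff_eq_of_isLeast_range {ι β : Type*} [PartialOrder β] {L : ι → β} {m : β}
    (h : IsLeast (range L) m) (y : ι) : (∀ z, L y ≤ L z) ↔ L y = m := by
  obtain ⟨⟨y₀, hy₀⟩, hm⟩ := h
  exact ⟨fun hy => le_antisymm (hy₀ ▸ hy y₀) (hm ⟨y, rfl⟩), fun hy z => hy ▸ hm ⟨z, rfl⟩⟩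

theorem lt_mul_of_div_lt_of_le {p q α x : ℝ} (hp : 0 ≤ p) (hq : 0 < q) (hα : p / q < α)
    (hx : q ≤ x) : p < α * x :=
  calc p < α * q := (div_lt_iff₀ hq).mp hα
    _ ≤ α * x := mul_le_mul_of_nonneg_left hx ((div_nonneg hp hq.le).trans hα.le)

section CMPE

variable {Y : Type*} (f g : Y → ℝ) (α : ℝ) {p q : ℝ}

noncomputable def cmpeLoss (y : Y) : ℝ := if g y ≤ 0 then f y else α * (f y + g y)

theorem lt_cmpeLoss_of_pos (hp : 0 ≤ p) (hq : 0 < q) (hα : p / q < α)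
    (hq_le : q ∈ lowerBounds ((fun y => f y + g y) '' {y | 0 < g y})) {z : Y} (hz : 0 < g z) :
    p < cmpeLoss f g α z := by
  rw [cmpeLoss, if_neg hz.not_ge]
  exact lt_mul_of_div_lt_of_le hp hq hα (hq_le ⟨z, hz, rfl⟩)

theorem isLeast_range_cmpeLoss (hp : IsLeast (f '' {y | g y ≤ 0}) p)
    (hinfeas : ∀ z, 0 < g z → p < cmpeLoss f g α z) : IsLeast (range (cmpeLoss f g α)) p := by
  obtain ⟨⟨y₀, hy₀, rfl⟩, hle⟩ := hp
  refine ⟨⟨y₀, if_pos hy₀⟩, ?_⟩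
  rintro _ ⟨z, rfl⟩
  rcases le_or_gt (g z) 0 with hz | hz
  · rw [cmpeLoss, if_pos hz]
    exact hle ⟨z, hz, rfl⟩
  · exact (hinfeas z hz).le

theorem cmpeLoss_eq_iff (hinfeas : ∀ z, 0 < g z → p < cmpeLoss f g α z) (y : Y) :
    cmpeLoss f g α y = p ↔ g y ≤ 0 ∧ f y = p := by
  rcases le_or_gt (g y) 0 with hy | hy
  · simp [cmpeLoss, hy]
  · simp only [hy.not_ge, false_and, iff_false]
    exact (hinfeas y hy).ne'

end CMPE

theorem cmpe_loss_minimizers_eq_optimal_general {Y : Type*} [Fintype Y]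
    (f g : Y → ℝ) (α : ℝ)
    (hfeas : (Finset.univ.filter (fun y => g y ≤ 0)).Nonempty)
    (hinfeas : (Finset.univ.filter (fun y => 0 < g y)).Nonempty)
    (hf : ∀ y, 0 < f y)
    (pstar qstar : ℝ)
    (hp : pstar = (Finset.univ.filter (fun y => g y ≤ 0)).inf' hfeas f)
    (hq : qstar = (Finset.univ.filter (fun y => 0 < g y)).inf' hinfeas (fun y => f y + g y))
    (hα : α > pstar / qstar)
    (L : Y → ℝ)
    (hL : ∀ y, L y = if g y ≤ 0 then f y else α * (f y + g y)) :
    ∀ y : Y, (∀ z : Y, L y ≤ L z) ↔ (g y ≤ 0 ∧ f y = pstar) := by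
  obtain rfl : L = cmpeLoss f g α := funext hL
  have hp_least : IsLeast (f '' {y | g y ≤ 0}) pstar := by
    simpa [hp] using Finset.isLeast_image_inf' _ hfeas f
  have hq_least : IsLeast ((fun y => f y + g y) '' {y | 0 < g y}) qstar := by
    simpa [hq] using Finset.isLeast_image_inf' _ hinfeas (fun y => f y + g y)
  have hp_pos : 0 < pstar := by
    obtain ⟨y, -, rfl⟩ := hp_least.1
    exact hf y
  have hq_pos : 0 < qstar := by
    obtain ⟨y, hy, rfl⟩ := hq_least.1
    exact add_pos (hf y) hy
  have hlt : ∀ z, 0 < g z → pstar < cmpeLoss f g α z :=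
    fun z => lt_cmpeLoss_of_pos f g α hp_pos.le hq_pos hα hq_least.2
  intro y
  rw [forall_le_iff_eq_of_isLeast_range (isLeast_range_cmpeLoss f g α hp_least hlt),
    cmpeLoss_eq_iff f g α hlt]

/-- Global minimizers of the loss `L` coincide with the optimal solutions of CMPE:
`y` minimizes `L` over `Y` iff `g y ≤ 0` and `f y = p*`. -/
theorem cmpe_loss_minimizers_eq_optimal {Y : Type*} [Fintype Y] [Nonempty Y]
    (f g : Y → ℝ) (α : ℝ)
    (hfeas : (Finset.univ.filter (fun y => g y ≤ 0)).Nonempty)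
    (hinfeas : (Finset.univ.filter (fun y => 0 < g y)).Nonempty)
    (hf : ∀ y, 0 < f y)
    (pstar qstar : ℝ)
    (hp : pstar = (Finset.univ.filter (fun y => g y ≤ 0)).inf' hfeas f)
    (hq : qstar = (Finset.univ.filter (fun y => 0 < g y)).inf' hinfeas (fun y => f y + g y))
    (hα : α > pstar / qstar)
    (L : Y → ℝ)
    (hL : ∀ y, L y = if g y ≤ 0 then f y else α * (f y + g y)) :
    ∀ y : Y, (∀ z : Y, L y ≤ L z) ↔ (g y ≤ 0 ∧ f y = pstar) :=
  cmpe_loss_minimizers_eq_optimal_general f g α hfeas hinfeas hf pstar qstar hp hq hα L hL
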